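/- Let n ≥ 4 and let I' be an order ideal of F₃(n) with max ⋃ I' = n. Then the set H' of ⪯-minimal elements of F₃(n)∖I' has at most ⌊(n−3)/2⌋ elements. -/
import Mathlib


/-- The 4-element set `{i, i+1, j, j+1}`, denoted `(i,j)` in the paper. -/
def pairSet (i j : ℕ) : Finset ℕ := {i, i + 1, j, j + 1}

/-- Membership in the collection `F₃(n)` of 4-element subsets of `{1,…,n}`
of the form `{i, i+1, j, j+1}` with `1 ≤ i`, `i+2 ≤ j`, `j+1 ≤ n`. -/
def memF3 (n : ℕ) (f : Finset ℕ) : Prop :=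
  ∃ i j : ℕ, 1 ≤ i ∧ i + 2 ≤ j ∧ j + 1 ≤ n ∧ f = pairSet i j

/-- The partial order `⪯` on finite subsets of `ℕ` of equal cardinality:
componentwise comparison of the increasingly sorted lists of elements. -/
def squeezedLE (f g : Finset ℕ) : Prop :=
  List.Forall₂ (· ≤ ·) (f.sort (· ≤ ·)) (g.sort (· ≤ ·))

/-- `I` is an order ideal of `F₃(n)` w.r.t. `⪯`. -/
def IsIdealF3 (n : ℕ) (I : Set (Finset ℕ)) : Prop :=
  (∀ f ∈ I, memF3 n f) ∧
  ∀ f g : Finset ℕ, memF3 n f → g ∈ I → squeezedLE f g → f ∈ I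

/-- `max ⋃ I`, the largest vertex used by the collection `I`. -/
noncomputable def maxVertex (I : Set (Finset ℕ)) : ℕ :=
  sSup (⋃ f ∈ I, (f : Set ℕ))

/-- `0 * K = {{0} ∪ f : f ∈ K}`. -/
def coneZero (K : Set (Finset ℕ)) : Set (Finset ℕ) := (insert 0) '' K

/-- A facet of the squeezed sphere `S(I)`: a 4-element set contained in
exactly one member of `I`. -/
def isFacetOfS (I : Set (Finset ℕ)) (F : Finset ℕ) : Prop :=
  F.card = 4 ∧ ∃! g, g ∈ I ∧ F ⊆ g

/-- The gap of `(i,j) = {i, i+1, j, j+1}`, i.e. `j - i - 2`. -/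
def gapOf (f : Finset ℕ) : ℕ :=
  f.sup id - (f.sort (· ≤ ·)).headI - 3

/-- `m` is a `⪯`-minimal element of the set `S`. -/
def IsMinIn (S : Set (Finset ℕ)) (m : Finset ℕ) : Prop :=
  m ∈ S ∧ ∀ x ∈ S, squeezedLE x m → x = m

lemma sort_pairSet {i j : ℕ} (h : i + 2 ≤ j) :
    (pairSet i j).sort (· ≤ ·) = [i, i+1, j, j+1] := by
  unfold pairSet
  rw [Finset.sort_insert, Finset.sort_insert, Finset.sort_insert, Finset.sort_singleton]
  all_goals simp
  all_goals omega

lemma squeezedLE_pair {i j i' j' : ℕ} (h : i + 2 ≤ j) (h' : i' + 2 ≤ j') :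
    squeezedLE (pairSet i j) (pairSet i' j') ↔ (i ≤ i' ∧ j ≤ j') := by
  unfold squeezedLE
  rw [sort_pairSet h, sort_pairSet h']
  constructor
  · intro hf
    rcases hf with _ | ⟨h1, _ | ⟨h2, _ | ⟨h3, _⟩⟩⟩
    exact ⟨h1, h3⟩
  · rintro ⟨h1, h2⟩
    exact .cons h1 (.cons (by omega) (.cons h2 (.cons (by omega) .nil)))

lemma pairSet_inj {i j i' j' : ℕ} (h : i + 2 ≤ j) (h' : i' + 2 ≤ j')
    (he : pairSet i j = pairSet i' j') : i = i' ∧ j = j' := by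
  have := sort_pairSet h
  rw [he, sort_pairSet h'] at this
  simp at this
  omega

/-- The set `H'` of `⪯`-minimal elements of `F₃(n) ∖ I'` has at most
`⌊(n-3)/2⌋` elements. -/
theorem count_minimal_nonmembers (n : ℕ) (hn : 4 ≤ n) (I : Set (Finset ℕ))
    (hI : IsIdealF3 n I) (hmax : maxVertex I = n) :
    {h : Finset ℕ | IsMinIn {x | memF3 n x ∧ x ∉ I} h}.Finite ∧
    {h : Finset ℕ | IsMinIn {x | memF3 n x ∧ x ∉ I} h}.ncard ≤ (n - 3) / 2 := by
  obtain ⟨hIF, hIdeal⟩ := hI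
  set Comp : Set (Finset ℕ) := {x | memF3 n x ∧ x ∉ I} with hComp
  set H : Set (Finset ℕ) := {h : Finset ℕ | IsMinIn Comp h} with hH
  -- Step 1: pairSet 1 (n-1) ∈ I
  have hbdd : BddAbove (⋃ f ∈ I, (f : Set ℕ)) := by
    refine ⟨n, ?_⟩
    rintro x hx
    simp only [Set.mem_iUnion] at hx
    obtain ⟨f, hf, hxf⟩ := hx
    obtain ⟨i, j, hi, hij, hjn, rfl⟩ := hIF f hf
    simp only [pairSet, Finset.coe_insert, Set.mem_insert_iff, Finset.coe_singleton,
      Set.mem_singleton_iff] at hxf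
    rcases hxf with rfl | rfl | rfl | rfl <;> omega
  have hne : (⋃ f ∈ I, (f : Set ℕ)).Nonempty := by
    by_contra h
    rw [Set.not_nonempty_iff_eq_empty] at h
    unfold maxVertex at hmax
    rw [h] at hmax
    simp at hmax
    omega
  have hnmem : n ∈ ⋃ f ∈ I, (f : Set ℕ) := hmax ▸ Nat.sSup_mem hne hbdd
  simp only [Set.mem_iUnion] at hnmem
  obtain ⟨f, hf, hnf⟩ := hnmem
  obtain ⟨i, j, hi, hij, hjn, rfl⟩ := hIF f hf
  have hjn' : j + 1 = n := by
    simp only [pairSet, Finset.coe_insert, Set.mem_insert_iff, Finset.coe_singleton,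
      Set.mem_singleton_iff] at hnf
    omega
  have h1I : pairSet 1 (n - 1) ∈ I := by
    have hj : j = n - 1 := by omega
    subst hj
    refine hIdeal _ _ ⟨1, n - 1, le_refl 1, by omega, by omega, rfl⟩ hf ?_
    exact (squeezedLE_pair (by omega) (by omega)).2 ⟨hi, le_refl _⟩
  -- Step 2: parametrize H
  set A : Set (ℕ × ℕ) :=
    {p : ℕ × ℕ | 1 ≤ p.1 ∧ p.1 + 2 ≤ p.2 ∧ p.2 + 1 ≤ n ∧ pairSet p.1 p.2 ∈ H} with hA
  have himg : H = (fun p : ℕ × ℕ => pairSet p.1 p.2) '' A := by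
    ext h
    constructor
    · intro hh
      obtain ⟨i, j, hi, hij, hjn, rfl⟩ := hh.1.1
      exact ⟨(i, j), ⟨hi, hij, hjn, hh⟩, rfl⟩
    · rintro ⟨p, hp, rfl⟩
      exact hp.2.2.2
  have hAfin : A.Finite := by
    apply Set.Finite.subset ((Set.finite_Iio n).prod (Set.finite_Iio n))
    rintro ⟨a, b⟩ ⟨h1, h2, h3, _⟩
    exact ⟨by simpa using by omega, by simpa using by omega⟩
  have hinj : Set.InjOn (fun p : ℕ × ℕ => pairSet p.1 p.2) A := by
    rintro p hp q hq he
    have := pairSet_inj hp.2.1 hq.2.1 he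
    exact Prod.ext this.1 this.2
  have hHfin : H.Finite := himg ▸ hAfin.image _
  refine ⟨hHfin, ?_⟩
  have hcard : H.ncard = A.ncard := by rw [himg, Set.ncard_image_of_injOn hinj]
  rw [hcard]
  -- Step 3: antichain property
  have hanti : ∀ p ∈ A, ∀ q ∈ A, p.1 ≤ q.1 → p.2 ≤ q.2 → p = q := by
    intro p hp q hq h1 h2
    have hmin : IsMinIn Comp (pairSet q.1 q.2) := hq.2.2.2
    have hpc : pairSet p.1 p.2 ∈ Comp := hp.2.2.2.1
    have heq := hmin.2 _ hpc ((squeezedLE_pair hp.2.1 hq.2.1).2 ⟨h1, h2⟩)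
    have := pairSet_inj hp.2.1 hq.2.1 heq
    exact Prod.ext this.1 this.2
  have hnot1 : (1, n - 1) ∉ A := by
    intro hmem
    exact hmem.2.2.2.1.2 h1I
  -- Step 4: Finset counting
  set B : Finset (ℕ × ℕ) := hAfin.toFinset with hB
  have hBA : ∀ p, p ∈ B ↔ p ∈ A := fun p => hAfin.mem_toFinset
  have hcard2 : A.ncard = B.card := Set.ncard_eq_toFinset_card A hAfin
  rw [hcard2]
  rcases B.eq_empty_or_nonempty with hBe | hBne
  · simp [hBe]
  set S : Finset ℕ := B.image Prod.fst with hS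
  set T : Finset ℕ := B.image Prod.snd with hT
  have hSne : S.Nonempty := hBne.image _
  have hTne : T.Nonempty := hBne.image _
  have hfstinj : Set.InjOn Prod.fst (B : Set (ℕ × ℕ)) := by
    intro p hp q hq he
    rcases le_total p.2 q.2 with h | h
    · exact hanti p ((hBA p).1 hp) q ((hBA q).1 hq) he.le h
    · exact (hanti q ((hBA q).1 hq) p ((hBA p).1 hp) he.ge h).symm
  have hsndinj : Set.InjOn Prod.snd (B : Set (ℕ × ℕ)) := by
    intro p hp q hq he
    rcases le_total p.1 q.1 with h | h
    · exact hanti p ((hBA p).1 hp) q ((hBA q).1 hq) h he.le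
    · exact (hanti q ((hBA q).1 hq) p ((hBA p).1 hp) h he.ge).symm
  have hScard : S.card = B.card := Finset.card_image_of_injOn hfstinj
  have hTcard : T.card = B.card := Finset.card_image_of_injOn hsndinj
  set maxS := S.max' hSne
  set minS := S.min' hSne
  set maxT := T.max' hTne
  set minT := T.min' hTne
  -- the element with largest first coordinate
  obtain ⟨a, haB, ha1⟩ := Finset.mem_image.1 (S.max'_mem hSne)
  obtain ⟨c, hcB, hc1⟩ := Finset.mem_image.1 (S.min'_mem hSne)
  have haA : a ∈ A := (hBA a).1 haB
  have hcA : c ∈ A := (hBA c).1 hcB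
  have ha2 : a.2 = minT := by
    refine le_antisymm ?_ (T.min'_le a.2 (Finset.mem_image_of_mem _ haB))
    apply Finset.le_min'
    intro t ht
    obtain ⟨b, hbB, rfl⟩ := Finset.mem_image.1 ht
    by_cases hba : b = a
    · subst hba; exact le_refl _
    · by_contra hlt
      push_neg at hlt
      have hb1 : b.1 ≤ a.1 := ha1 ▸ S.le_max' b.1 (Finset.mem_image_of_mem _ hbB)
      have := hanti b ((hBA b).1 hbB) a haA hb1 hlt.le
      exact hba this
  have hc2 : c.2 = maxT := by
    refine le_antisymm (T.le_max' c.2 (Finset.mem_image_of_mem _ hcB)) ?_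
    apply Finset.max'_le
    intro t ht
    obtain ⟨b, hbB, rfl⟩ := Finset.mem_image.1 ht
    by_cases hbc : b = c
    · subst hbc; exact le_refl _
    · by_contra hlt
      push_neg at hlt
      have hb1 : c.1 ≤ b.1 := hc1 ▸ S.min'_le b.1 (Finset.mem_image_of_mem _ hbB)
      have := hanti c hcA b ((hBA b).1 hbB) hb1 hlt.le
      exact hbc this.symm
  -- bounds
  have ha1' : a.1 = maxS := ha1
  have hc1' : c.1 = minS := hc1
  have hgap : maxS + 2 ≤ minT := by rw [← ha1', ← ha2]; exact haA.2.1
  have hminS1 : 1 ≤ minS := hc1' ▸ hcA.1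
  have hmaxTn : maxT + 1 ≤ n := hc2 ▸ hcA.2.2.1
  have hSsub : S ⊆ Finset.Icc minS maxS := fun s hs =>
    Finset.mem_Icc.2 ⟨S.min'_le s hs, S.le_max' s hs⟩
  have hTsub : T ⊆ Finset.Icc minT maxT := fun t ht =>
    Finset.mem_Icc.2 ⟨T.min'_le t ht, T.le_max' t ht⟩
  have hSb : B.card ≤ maxS + 1 - minS := by
    rw [← hScard]
    calc S.card ≤ (Finset.Icc minS maxS).card := Finset.card_le_card hSsub
    _ = maxS + 1 - minS := Nat.card_Icc _ _
  have hTb : B.card ≤ maxT + 1 - minT := by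
    rw [← hTcard]
    calc T.card ≤ (Finset.Icc minT maxT).card := Finset.card_le_card hTsub
    _ = maxT + 1 - minT := Nat.card_Icc _ _
  have hcorner : ¬(minS = 1 ∧ maxT = n - 1) := by
    rintro ⟨hm1, hm2⟩
    apply hnot1
    have : (1, n - 1) = c := Prod.ext (by simp; omega) (by simp; omega)
    rw [this]
    exact hcA
  have hminmaxS : minS ≤ maxS := S.min'_le _ (S.max'_mem hSne)
  have hminmaxT : minT ≤ maxT := T.min'_le _ (T.max'_mem hTne)
  omega
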